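/- Let m ≥ 1. For any finite family {X_i}_{i∈I} of subsets X_i ⊆ ℤ_{≥0}^m, one has Vert(⋃_{i∈I} X_i) = ⊕_{i∈I} Vert(X_i) and Vert(Σ_{i∈I} X_i) = ⊙_{i∈I} Vert(X_i), where Σ denotes the iterated Minkowski sum; in particular, for any T ⊆ ℤ_{≥0}^m and n ≥ 1, Vert(nT) = Vert(T)^{⊙n} where nT denotes the n-fold Minkowski sum T + ⋯ + T. -/

import Mathlib

open Pointwise

noncomputable section

/-- The embedding of `ℤ_{≥0}^m` into `ℝ^m`. -/
def emb {m : ℕ} (x : Fin m → ℕ) : Fin m → ℝ := fun i => (x i : ℝ)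

/-- The Newton polygon of `X ⊆ ℤ_{≥0}^m`: the convex hull (in `ℝ^m`) of
`X + ℤ_{≥0}^m`. -/
def newton {m : ℕ} (X : Set (Fin m → ℕ)) : Set (Fin m → ℝ) :=
  convexHull ℝ (emb '' (X + (Set.univ : Set (Fin m → ℕ))))

/-- The vertex set of `X`: the elements `x ∈ X` with `x ∉ N(X \ {x})`. -/
def vert {m : ℕ} (X : Set (Fin m → ℕ)) : Set (Fin m → ℕ) :=
  {x ∈ X | emb x ∉ newton (X \ {x})}

/-- Tropical sum of supports. -/
def oplus {m : ℕ} (S T : Set (Fin m → ℕ)) : Set (Fin m → ℕ) := vert (S ∪ T)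

/-- Tropical product of supports (via Minkowski sum). -/
def odot {m : ℕ} (S T : Set (Fin m → ℕ)) : Set (Fin m → ℕ) := vert (S + T)

/-- `n`-fold Minkowski sum `nT = T + ⋯ + T`, with `0T = {(0,…,0)}`. -/
def nMink {m : ℕ} : ℕ → Set (Fin m → ℕ) → Set (Fin m → ℕ)
  | 0, _ => {0}
  | k + 1, T => T + nMink k T

/-- `n`-fold tropical power `S^{⊙n}`, with `S^{⊙0} = {(0,…,0)}`. -/
def odotPow {m : ℕ} : ℕ → Set (Fin m → ℕ) → Set (Fin m → ℕ)
  | 0, _ => {0}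
  | k + 1, S => odot S (odotPow k S)

/-!
A point `x ∈ X` is a vertex exactly when `emb x` is an extreme point of `N(X)`. Indeed `N(X)` is the
convex hull of the upward closed convex set `N(X \ {x})` and the orthant `emb x + ℝ_{≥0}^m`, and a
point outside an upward closed convex set is extreme in such a hull; conversely, extreme points of
`N(X)` are minimal in it and hence lie in `emb '' X`. So `Vert X` is determined by `N(X)` among
subsets of `X`. By Dickson's lemma the minimal elements of `X` form a finite set spanning `N(X)`,
and a minimal subset of it with the same Newton polygon consists of vertices; so `N(Vert X) = N(X)`,
hence `Vert Y = Vert X` whenever `Vert X ⊆ Y ⊆ X`. Applied to `Vert(X ∪ Y) ⊆ Vert X ∪ Vert Y`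
and, using `N(X + Y) = N(X) + N(Y)`, to `Vert(X + Y) ⊆ Vert X + Vert Y`, this gives both identities
for two sets; induction gives them for finite families.
-/

open Set

section OrderedModule

variable {𝕜 E : Type*} [Field 𝕜] [LinearOrder 𝕜] [AddCommGroup E] [PartialOrder E]
  [IsOrderedAddMonoid E] [Module 𝕜 E]

lemma eq_of_mem_openSegment_of_le [PosSMulMono 𝕜 E] {e a b : E} (ha : e ≤ a) (hb : e ≤ b)
    (he : e ∈ openSegment 𝕜 a b) : a = e := by
  obtain ⟨p, q, hp, hq, hpq, rfl⟩ := he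
  have hsum : p • (a - (p • a + q • b)) + q • (b - (p • a + q • b)) = 0 := by
    linear_combination (norm := module) -(hpq • (p • a + q • b))
  have hpa := ((add_eq_zero_iff_of_nonneg (smul_nonneg hp.le (sub_nonneg.2 ha))
    (smul_nonneg hq.le (sub_nonneg.2 hb))).1 hsum).1
  rw [smul_eq_zero, sub_eq_zero] at hpa
  exact hpa.resolve_left hp.ne'

variable [IsStrictOrderedRing 𝕜]

lemma IsUpperSet.eq_of_le_of_mem_extremePoints {A : Set E} {a z : E} (hA : IsUpperSet A)
    (hz : z ∈ A.extremePoints 𝕜) (ha : a ∈ A) (haz : a ≤ z) : a = z := by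
  have hb : z + (z - a) ∈ A := hA (le_add_of_nonneg_right (sub_nonneg.2 haz)) hz.1
  refine hz.2 ha hb ⟨2⁻¹, 2⁻¹, by positivity, by positivity, by norm_num, ?_⟩
  module

lemma mem_extremePoints_convexHull_union_Ici [PosSMulMono 𝕜 E] {C : Set E} {e : E}
    (hC : Convex 𝕜 C) (hCu : IsUpperSet C) (he : e ∉ C) :
    e ∈ (convexHull 𝕜 (C ∪ Ici e)).extremePoints 𝕜 := by
  rcases C.eq_empty_or_nonempty with rfl | hne
  · rw [empty_union, (convex_Ici e).convexHull_eq]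
    exact ⟨le_rfl, fun a ha b hb hab => eq_of_mem_openSegment_of_le ha hb hab⟩
  rw [hC.convexHull_union (convex_Ici e) hne nonempty_Ici]
  refine ⟨subset_convexJoin_right hne self_mem_Ici, fun a ha b hb hab => ?_⟩
  obtain ⟨c₁, hc₁, a₁, ha₁, s₁, t₁, hs₁, ht₁, hst₁, rfl⟩ := mem_convexJoin.1 ha
  obtain ⟨c₂, hc₂, a₂, ha₂, s₂, t₂, hs₂, ht₂, hst₂, rfl⟩ := mem_convexJoin.1 hb
  obtain ⟨p, q, hp, hq, hpq, heq⟩ := id hab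
  -- If the segment through `e` used `C` at all, `e` would dominate a point of `C`.
  have hα : p * s₁ + q * s₂ = 0 := by
    by_contra hα
    have hα : 0 < p * s₁ + q * s₂ := (add_nonneg (by positivity) (by positivity)).lt_of_ne' hα
    set c := (p * s₁ / (p * s₁ + q * s₂)) • c₁ + (q * s₂ / (p * s₁ + q * s₂)) • c₂
    have hcC : c ∈ C := convex_iff_div.1 hC hc₁ hc₂ (by positivity) (by positivity) hα
    have hαc : (p * s₁ + q * s₂) • c = (p * s₁) • c₁ + (q * s₂) • c₂ := by
      simp only [c, smul_add, smul_smul, mul_div_cancel₀ _ hα.ne']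
    have hdiff : (p * s₁ + q * s₂) • e - (p * s₁ + q * s₂) • c =
        (p * t₁) • (a₁ - e) + (q * t₂) • (a₂ - e) := by
      rw [hαc]
      linear_combination (norm := module) -heq + (p * hst₁ + q * hst₂ + hpq) • e
    have hce : c ≤ e := by
      refine le_of_smul_le_smul_left (sub_nonneg.1 ?_) hα
      rw [hdiff]
      exact add_nonneg (smul_nonneg (by positivity) (sub_nonneg.2 ha₁))
        (smul_nonneg (by positivity) (sub_nonneg.2 ha₂))
    exact he (hCu hce hcC)
  obtain ⟨hps₁, hqs₂⟩ := (add_eq_zero_iff_of_nonneg (by positivity) (by positivity)).1 hα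
  obtain rfl : s₁ = 0 := (mul_eq_zero.1 hps₁).resolve_left hp.ne'
  obtain rfl : s₂ = 0 := (mul_eq_zero.1 hqs₂).resolve_left hq.ne'
  simp only [zero_add] at hst₁ hst₂
  subst hst₁ hst₂
  simp only [zero_smul, one_smul, zero_add] at hab ⊢
  exact eq_of_mem_openSegment_of_le ha₁ ha₂ hab

end OrderedModule

lemma convexHull_range_natCast : convexHull ℝ (range ((↑) : ℕ → ℝ)) = Ici 0 := by
  refine (convexHull_min (range_subset_iff.2 fun n => mem_Ici.2 (Nat.cast_nonneg n))
    (convex_Ici 0)).antisymm fun r hr => ?_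
  have hfloor : ((⌊r⌋₊ : ℕ) : ℝ) ≤ ((⌊r⌋₊ + 1 : ℕ) : ℝ) := by push_cast; linarith
  refine segment_subset_convexHull (mem_range_self ⌊r⌋₊) (mem_range_self (⌊r⌋₊ + 1)) ?_
  rw [segment_eq_Icc hfloor]
  exact ⟨Nat.floor_le hr, by push_cast; exact (Nat.lt_floor_add_one r).le⟩

section Newton

variable {m : ℕ}

lemma emb_add (x y : Fin m → ℕ) : emb (x + y) = emb x + emb y := by
  funext i; simp [emb]

lemma emb_injective : Function.Injective (emb (m := m)) := fun _ _ h =>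
  funext fun i => Nat.cast_injective (congrFun h i)

lemma emb_nonneg (x : Fin m → ℕ) : 0 ≤ emb x := fun _ => Nat.cast_nonneg _

lemma image_emb_add (S T : Set (Fin m → ℕ)) : emb '' (S + T) = emb '' S + emb '' T :=
  image_add (AddMonoidHom.compLeft (Nat.castAddMonoidHom ℝ) (Fin m))

lemma convexHull_range_emb : convexHull ℝ (range (emb (m := m))) = Ici 0 := by
  rw [show range (emb (m := m)) = range (Pi.map fun _ => ((↑) : ℕ → ℝ)) from rfl, range_piMap,
    convexHull_pi, convexHull_range_natCast, ← pi_univ_Ici]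
  rfl

lemma newton_eq_convexHull_add_Ici (X : Set (Fin m → ℕ)) :
    newton X = convexHull ℝ (emb '' X) + Ici 0 := by
  rw [newton, image_emb_add, image_univ, convexHull_add, convexHull_range_emb]

lemma convex_newton (X : Set (Fin m → ℕ)) : Convex ℝ (newton X) := convex_convexHull ℝ _

lemma isUpperSet_newton (X : Set (Fin m → ℕ)) : IsUpperSet (newton X) := by
  rw [newton_eq_convexHull_add_Ici]
  exact (isUpperSet_Ici 0).add_left

lemma emb_mem_newton {X : Set (Fin m → ℕ)} {x : Fin m → ℕ} (hx : x ∈ X) : emb x ∈ newton X :=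
  subset_convexHull ℝ _ ⟨x + 0, add_mem_add hx (mem_univ 0), by rw [add_zero]⟩

lemma newton_subset_of_convex {X : Set (Fin m → ℕ)} {Z : Set (Fin m → ℝ)} (hZ : Convex ℝ Z)
    (hXZ : ∀ x ∈ X, Ici (emb x) ⊆ Z) : newton X ⊆ Z := by
  refine convexHull_min ?_ hZ
  rintro _ ⟨_, ⟨x, hx, u, -, rfl⟩, rfl⟩
  exact hXZ x hx (by rw [emb_add]; exact le_add_of_nonneg_right (emb_nonneg u))

lemma newton_subset_newton_iff {X Y : Set (Fin m → ℕ)} :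
    newton X ⊆ newton Y ↔ ∀ x ∈ X, emb x ∈ newton Y :=
  ⟨fun h _ hx => h (emb_mem_newton hx), fun h =>
    newton_subset_of_convex (convex_newton Y) fun x hx => (isUpperSet_newton Y).Ici_subset (h x hx)⟩

lemma newton_mono {X Y : Set (Fin m → ℕ)} (h : X ⊆ Y) : newton X ⊆ newton Y :=
  newton_subset_newton_iff.2 fun _ hx => emb_mem_newton (h hx)

lemma newton_empty : newton (∅ : Set (Fin m → ℕ)) = ∅ := by
  simp [newton]

lemma newton_add (S T : Set (Fin m → ℕ)) : newton (S + T) = newton S + newton T := by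
  rw [newton, newton, newton, ← convexHull_add, ← image_emb_add, add_add_add_comm, univ_add_univ]

lemma newton_eq_convexHull_union_Ici {X : Set (Fin m → ℕ)} {x : Fin m → ℕ} (hx : x ∈ X) :
    newton X = convexHull ℝ (newton (X \ {x}) ∪ Ici (emb x)) := by
  refine (newton_subset_of_convex (convex_convexHull ℝ _) fun y hy => ?_).antisymm
    (convexHull_min (union_subset (newton_mono sdiff_subset)
      ((isUpperSet_newton X).Ici_subset (emb_mem_newton hx))) (convex_newton X))
  refine subset_trans ?_ (subset_convexHull ℝ _)
  by_cases hyx : y = x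
  · exact hyx ▸ subset_union_right
  · exact ((isUpperSet_newton _).Ici_subset (emb_mem_newton (X := X \ {x}) ⟨hy, hyx⟩)).trans
      subset_union_left

lemma extremePoints_newton_subset (X : Set (Fin m → ℕ)) :
    (newton X).extremePoints ℝ ⊆ emb '' X := by
  intro z hz
  obtain ⟨_, ⟨x, hx, u, -, rfl⟩, rfl⟩ := extremePoints_convexHull_subset hz
  refine ⟨x, hx, (isUpperSet_newton X).eq_of_le_of_mem_extremePoints hz (emb_mem_newton hx) ?_⟩
  rw [emb_add]
  exact le_add_of_nonneg_right (emb_nonneg u)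

lemma vert_subset (X : Set (Fin m → ℕ)) : vert X ⊆ X := fun _ hx => hx.1

lemma mem_vert_iff {X : Set (Fin m → ℕ)} {x : Fin m → ℕ} :
    x ∈ vert X ↔ x ∈ X ∧ emb x ∈ (newton X).extremePoints ℝ := by
  refine ⟨fun ⟨hx, hv⟩ => ⟨hx, ?_⟩, fun ⟨hx, he⟩ => ⟨hx, fun hmem => ?_⟩⟩
  · rw [newton_eq_convexHull_union_Ici hx]
    exact mem_extremePoints_convexHull_union_Ici (convex_newton _) (isUpperSet_newton _) hv
  · obtain ⟨y, hy, hyx⟩ := extremePoints_newton_subset _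
      (inter_extremePoints_subset_extremePoints_of_subset (newton_mono sdiff_subset) ⟨hmem, he⟩)
    exact hy.2 (emb_injective hyx)

lemma vert_eq_of_subset_of_newton_eq {X Y : Set (Fin m → ℕ)} (hYX : Y ⊆ X)
    (h : newton Y = newton X) : vert Y = vert X := by
  ext x
  simp only [mem_vert_iff, h]
  refine ⟨fun ⟨hY, he⟩ => ⟨hYX hY, he⟩, fun ⟨_, he⟩ => ⟨?_, he⟩⟩
  obtain ⟨y, hy, hyx⟩ := extremePoints_newton_subset Y (h ▸ he)
  exact emb_injective hyx ▸ hy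

lemma newton_setOf_minimal (X : Set (Fin m → ℕ)) : newton {x | Minimal (· ∈ X) x} = newton X := by
  refine (newton_mono fun _ hx => hx.1).antisymm (newton_subset_newton_iff.2 fun x hx => ?_)
  obtain ⟨y, hyx, hy⟩ := exists_minimal_le_of_wellFoundedLT (· ∈ X) x hx
  exact isUpperSet_newton _ (fun i => Nat.cast_le.2 (hyx i)) (emb_mem_newton hy)

lemma finite_setOf_minimal (X : Set (Fin m → ℕ)) : {x | Minimal (· ∈ X) x}.Finite :=
  (setOfPred_minimal_antichain _).finite_of_partiallyWellOrderedOn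
    (isPWO_of_wellQuasiOrderedLE _)

lemma newton_vert (X : Set (Fin m → ℕ)) : newton (vert X) = newton X := by
  set M := {x | Minimal (· ∈ X) x}
  obtain ⟨G, ⟨hGM, hG⟩, hGmin⟩ := ((finite_setOf_minimal X).finite_subsets.subset
    (fun _ h => h.1)).exists_minimal (s := {G | G ⊆ M ∧ newton G = newton X})
    ⟨M, subset_rfl, newton_setOf_minimal X⟩
  have hGX : G ⊆ X := fun _ hx => (hGM hx).1
  -- A non-vertex of `G` could be dropped without changing the Newton polygon.
  have hvert : vert G = G := by
    refine (vert_subset G).antisymm fun x hx => ⟨hx, fun hmem => ?_⟩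
    have hdrop : newton (G \ {x}) = newton G :=
      (newton_mono sdiff_subset).antisymm (newton_subset_newton_iff.2 fun y hy => by
        by_cases hyx : y = x
        · exact hyx ▸ hmem
        · exact emb_mem_newton ⟨hy, hyx⟩)
    exact (hGmin ⟨sdiff_subset.trans hGM, hdrop.trans hG⟩ sdiff_subset hx).2 rfl
  rw [← vert_eq_of_subset_of_newton_eq hGX hG, hvert, hG]

lemma vert_eq_of_vert_subset {X Y : Set (Fin m → ℕ)} (h₁ : vert X ⊆ Y) (h₂ : Y ⊆ X) :
    vert Y = vert X :=
  vert_eq_of_subset_of_newton_eq h₂ ((newton_mono h₂).antisymm (newton_vert X ▸ newton_mono h₁))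

lemma vert_union_subset (X Y : Set (Fin m → ℕ)) : vert (X ∪ Y) ⊆ vert X ∪ vert Y := by
  rintro x ⟨hx | hx, hv⟩
  · exact Or.inl ⟨hx, fun h => hv (newton_mono (sdiff_subset_sdiff_left subset_union_left) h)⟩
  · exact Or.inr ⟨hx, fun h => hv (newton_mono (sdiff_subset_sdiff_left subset_union_right) h)⟩

lemma vert_union (X Y : Set (Fin m → ℕ)) : vert (X ∪ Y) = oplus (vert X) (vert Y) :=
  (vert_eq_of_vert_subset (vert_union_subset X Y)
    (union_subset_union (vert_subset X) (vert_subset Y))).symm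

lemma mem_vert_of_add_mem_vert_add {X Y : Set (Fin m → ℕ)} {x y : Fin m → ℕ} (hx : x ∈ X)
    (hy : y ∈ Y) (hxy : x + y ∈ vert (X + Y)) : x ∈ vert X := by
  refine ⟨hx, fun hmem => hxy.2 ?_⟩
  have hsub : (X \ {x}) + {y} ⊆ (X + Y) \ {x + y} := by
    rintro _ ⟨a, ha, _, rfl, rfl⟩
    exact ⟨add_mem_add ha.1 hy, fun h => ha.2 (add_right_cancel h)⟩
  refine newton_mono hsub ?_
  rw [newton_add, emb_add]
  exact add_mem_add hmem (emb_mem_newton rfl)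

lemma vert_add_subset (X Y : Set (Fin m → ℕ)) : vert (X + Y) ⊆ vert X + vert Y := by
  intro z hz
  obtain ⟨x, hx, y, hy, rfl⟩ := hz.1
  have hyx : y + x ∈ vert (Y + X) := by rwa [add_comm y, add_comm Y]
  exact add_mem_add (mem_vert_of_add_mem_vert_add hx hy hz) (mem_vert_of_add_mem_vert_add hy hx hyx)

lemma vert_add (X Y : Set (Fin m → ℕ)) : vert (X + Y) = odot (vert X) (vert Y) :=
  (vert_eq_of_vert_subset (vert_add_subset X Y)
    (add_subset_add (vert_subset X) (vert_subset Y))).symm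

lemma vert_empty : vert (∅ : Set (Fin m → ℕ)) = ∅ := subset_empty_iff.1 (vert_subset ∅)

lemma vert_singleton (x : Fin m → ℕ) : vert {x} = {x} :=
  (vert_subset _).antisymm <| by
    rintro _ rfl
    exact ⟨rfl, by rw [sdiff_self, newton_empty]; exact notMem_empty _⟩

lemma vert_biUnion_list {ι : Type*} (X : ι → Set (Fin m → ℕ)) (l : List ι) :
    vert (⋃ i ∈ l, X i) = (l.map fun i => vert (X i)).foldr oplus ∅ := by
  induction l with
  | nil => simp [vert_empty]
  | cons a l ih =>
    rw [List.map_cons, List.foldr_cons, ← ih, ← vert_union]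
    simp only [List.mem_cons, iUnion_iUnion_eq_or_left]

lemma vert_list_sum {ι : Type*} (X : ι → Set (Fin m → ℕ)) (l : List ι) :
    vert (l.map X).sum = (l.map fun i => vert (X i)).foldr odot {0} := by
  induction l with
  | nil => exact vert_singleton 0
  | cons a l ih => rw [List.map_cons, List.sum_cons, vert_add, ih, List.map_cons, List.foldr_cons]

lemma vert_nMink (n : ℕ) (T : Set (Fin m → ℕ)) : vert (nMink n T) = odotPow n (vert T) := by
  induction n with
  | zero => exact vert_singleton 0
  | succ k ih => rw [nMink, odotPow, vert_add, ih]

end Newton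

theorem vert_homomorphism_general (m : ℕ) {ι : Type} (I : Finset ι)
    (X : ι → Set (Fin m → ℕ)) :
    vert (⋃ i ∈ I, X i) = (I.toList.map fun i => vert (X i)).foldr oplus ∅ ∧
    vert (∑ i ∈ I, X i) = (I.toList.map fun i => vert (X i)).foldr odot {0} ∧
    ∀ (T : Set (Fin m → ℕ)) (n : ℕ), 1 ≤ n → vert (nMink n T) = odotPow n (vert T) := by
  refine ⟨?_, ?_, fun T n _ => vert_nMink n T⟩
  · simpa only [Finset.mem_toList] using vert_biUnion_list X I.toList
  · rw [← Finset.sum_map_toList]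
    exact vert_list_sum X I.toList

/-- `Vert` turns finite unions into `⊕`-sums and finite (iterated) Minkowski sums
into `⊙`-products; in particular `Vert(nT) = Vert(T)^{⊙n}` for `n ≥ 1`. -/
theorem vert_homomorphism (m : ℕ) (hm : 1 ≤ m) {ι : Type} (I : Finset ι)
    (X : ι → Set (Fin m → ℕ)) :
    vert (⋃ i ∈ I, X i) = (I.toList.map fun i => vert (X i)).foldr oplus ∅ ∧
    vert (∑ i ∈ I, X i) = (I.toList.map fun i => vert (X i)).foldr odot {0} ∧
    ∀ (T : Set (Fin m → ℕ)) (n : ℕ), 1 ≤ n → vert (nMink n T) = odotPow n (vert T) :=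
  vert_homomorphism_general m I X

end
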